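/- arXiv:1203.0721 — 4 statements merged into one kernel-verified Lean document; each statement's English description precedes it below -/
import Mathlib

section
/- Consider the Cucker–Smale system of N individuals in ℝ^d: for i = 1,…,N, the trajectories x_i, v_i : ℝ → ℝ^d are differentiable and satisfy x_i'(t) = v_i(t) and v_i'(t) = (1/N) · Σ_{j=1}^N H(‖x_j(t) − x_i(t)‖) (v_j(t) − v_i(t)), where H(r) = K/(ς² + r²)^γ with K, ς > 0 and 0 ≤ γ ≤ 1/2. Define Γ(t) = (1/2) Σ_{i≠j} ‖x_i(t) − x_j(t)‖². Then there exists a positive constant B₀ such that Γ(t) ≤ B₀ for all t ≥ 0. -/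
open Filter Finset
open scoped RealInnerProductSpace Topology

/-!
With `P = ∑ ‖xᵢ - xⱼ‖²` and `Q = ∑ ‖vᵢ - vⱼ‖²`, the equations give `P' ≤ 2 √P √Q`
(Cauchy–Schwarz) and, because the weights are symmetric and every pairwise distance is at most
`√P`, `Q' ≤ -2 H(√P) Q`. For `γ ≤ 1/2` the rate decays slowly enough that
`c · 2√P / (1 + P) ≤ H(√P)` with `c = K / (3 + ς)`, so the Lyapunov functional
`√Q + c log (1 + P)` is nonincreasing and `log (1 + P)` stays below its initial value over `c`.
-/

theorem Real.sqrt_add_le_add_sqrt {a b : ℝ} (ha : 0 ≤ a) (hb : 0 ≤ b) : √(a + b) ≤ √a + √b := by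
  rw [Real.sqrt_le_iff]
  refine ⟨by positivity, ?_⟩
  nlinarith [Real.sq_sqrt ha, Real.sq_sqrt hb, Real.sqrt_nonneg a, Real.sqrt_nonneg b]

theorem Real.rpow_le_one_add_sqrt {x γ : ℝ} (hx : 0 ≤ x) (hγ0 : 0 ≤ γ) (hγ : γ ≤ 1 / 2) :
    x ^ γ ≤ 1 + √x := by
  rcases le_total x 1 with hx1 | hx1
  · linarith [Real.rpow_le_one hx hx1 hγ0, Real.sqrt_nonneg x]
  · linarith [Real.sqrt_eq_rpow x ▸ Real.rpow_le_rpow_of_exponent_le hx1 hγ]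

-- `γ ≤ 1/2` gives `(ς² + u)^γ ≤ 1 + ς + √u`; with `2√u ≤ 1 + u` this yields the constant `3 + ς`.
theorem mul_two_mul_sqrt_div_le_div_rpow {K ς γ u : ℝ} (hK : 0 ≤ K) (hς : 0 < ς) (hγ0 : 0 ≤ γ)
    (hγ : γ ≤ 1 / 2) (hu : 0 ≤ u) :
    K / (3 + ς) * (2 * √u / (1 + u)) ≤ K / (ς ^ 2 + u) ^ γ := by
  have hrpow : (ς ^ 2 + u) ^ γ ≤ 1 + ς + √u := by
    have := Real.sqrt_add_le_add_sqrt (sq_nonneg ς) hu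
    rw [Real.sqrt_sq hς.le] at this
    linarith [Real.rpow_le_one_add_sqrt (by positivity : 0 ≤ ς ^ 2 + u) hγ0 hγ]
  have hkey : 2 * √u * (ς ^ 2 + u) ^ γ ≤ (3 + ς) * (1 + u) := by
    calc 2 * √u * (ς ^ 2 + u) ^ γ ≤ 2 * √u * (1 + ς + √u) := by gcongr
      _ ≤ (3 + ς) * (1 + u) := by
        nlinarith [Real.sq_sqrt hu, sq_nonneg (√u - 1), Real.sqrt_nonneg u]
  rw [div_mul_div_comm, div_le_div_iff₀ (by positivity) (by positivity)]
  calc K * (2 * √u) * (ς ^ 2 + u) ^ γ = K * (2 * √u * (ς ^ 2 + u) ^ γ) := by ring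
    _ ≤ K * ((3 + ς) * (1 + u)) := by gcongr

theorem sqrt_sub_div_sqrt_add_le {q ε : ℝ} (hq : 0 ≤ q) (hε : 0 < ε) :
    √q - q / √(q + ε) ≤ √ε := by
  have hs : 0 < √(q + ε) := Real.sqrt_pos.2 (by linarith)
  have hqs : √q ≤ √(q + ε) := Real.sqrt_le_sqrt (by linarith)
  have hsplit : √(q + ε) ≤ √q + √ε := Real.sqrt_add_le_add_sqrt hq hε.le
  rw [sub_le_iff_le_add, ← sub_le_iff_le_add', le_div_iff₀ hs]
  nlinarith [Real.mul_self_sqrt hq, Real.sqrt_nonneg q, Real.sqrt_nonneg ε]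

theorem lyapunov_deriv_le {q ε κ M dQ dP : ℝ} (hq : 0 ≤ q) (hε : 0 < ε) (hκ : 0 ≤ κ)
    (hκM : κ ≤ M) (hdQ : dQ ≤ -2 * κ * q) (hdP : dP ≤ κ * √q) :
    dQ / (2 * √(q + ε)) + dP ≤ M * √ε := by
  have hs : 0 < √(q + ε) := Real.sqrt_pos.2 (by linarith)
  have hdQ' : dQ / (2 * √(q + ε)) ≤ -κ * (q / √(q + ε)) := by
    rw [div_le_iff₀ (by positivity)]
    field_simp
    linarith
  calc dQ / (2 * √(q + ε)) + dP ≤ κ * (√q - q / √(q + ε)) := by linarith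
    _ ≤ M * √ε := mul_le_mul hκM (sqrt_sub_div_sqrt_add_le hq hε) (by
          rw [sub_nonneg, div_le_iff₀ hs]
          nlinarith [Real.mul_self_sqrt hq, mul_le_mul_of_nonneg_left
            (Real.sqrt_le_sqrt (by linarith : q ≤ q + ε)) (Real.sqrt_nonneg q)]) (hκ.trans hκM)

theorem antitone_sqrt_add_mul_log_of_dissipation {P Q dP dQ κ : ℝ → ℝ} {c M : ℝ}
    (hP : ∀ t, HasDerivAt P (dP t) t) (hQ : ∀ t, HasDerivAt Q (dQ t) t)
    (hP0 : ∀ t, 0 ≤ P t) (hQ0 : ∀ t, 0 ≤ Q t) (hκ0 : ∀ t, 0 ≤ κ t) (hκM : ∀ t, κ t ≤ M)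
    (hdQ : ∀ t, dQ t ≤ -2 * κ t * Q t) (hdP : ∀ t, c * (dP t / (1 + P t)) ≤ κ t * √(Q t)) :
    Antitone fun t => √(Q t) + c * Real.log (1 + P t) := by
  intro s t hst
  -- `√Q` need not be differentiable where `Q = 0`, so run the argument for `√(Q + ε)`.
  have hε : ∀ ε > 0, √(Q t) + c * Real.log (1 + P t)
      ≤ √(Q s + ε) + c * Real.log (1 + P s) + M * √ε * (t - s) := by
    intro ε hε
    have hL : ∀ r, HasDerivAt (fun r => √(Q r + ε) + c * Real.log (1 + P r))
        (dQ r / (2 * √(Q r + ε)) + c * (dP r / (1 + P r))) r := fun r =>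
      (((hQ r).add_const ε).sqrt (by linarith [hQ0 r])).add
        ((((hP r).const_add 1).log (by linarith [hP0 r])).const_mul c)
    have hgrowth := image_sub_le_mul_sub_of_deriv_le (fun r => (hL r).differentiableAt)
      (fun r => (hL r).deriv ▸ lyapunov_deriv_le (hQ0 r) hε (hκ0 r) (hκM r) (hdQ r) (hdP r)) hst
    have hsqrt : √(Q t) ≤ √(Q t + ε) := Real.sqrt_le_sqrt (by linarith)
    linarith
  have hlim : Tendsto (fun ε => √(Q s + ε) + c * Real.log (1 + P s) + M * √ε * (t - s))
      (𝓝[>] 0) (𝓝 (√(Q s) + c * Real.log (1 + P s))) := by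
    have hcont : Continuous fun ε => √(Q s + ε) + c * Real.log (1 + P s) + M * √ε * (t - s) := by
      fun_prop
    simpa using (hcont.tendsto 0).mono_left nhdsWithin_le_nhds
  exact ge_of_tendsto hlim (eventually_nhdsWithin_of_forall hε)

section Spread

variable {ι E : Type*} [Fintype ι] [NormedAddCommGroup E]

/-- For positions `u`, `spread u` is twice the paper's `Γ`. -/
def spread (u : ι → E) : ℝ := ∑ i, ∑ j, ‖u i - u j‖ ^ 2

theorem spread_nonneg (u : ι → E) : 0 ≤ spread u :=
  sum_nonneg fun _ _ => sum_nonneg fun _ _ => sq_nonneg _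

theorem sq_norm_sub_le_spread (u : ι → E) (i j : ι) : ‖u i - u j‖ ^ 2 ≤ spread u :=
  (single_le_sum (f := fun j => ‖u i - u j‖ ^ 2) (fun _ _ => sq_nonneg _) (mem_univ j)).trans
    (single_le_sum (f := fun i => ∑ j, ‖u i - u j‖ ^ 2)
      (fun _ _ => sum_nonneg fun _ _ => sq_nonneg _) (mem_univ i))

theorem sum_sum_sdiff_singleton_eq_spread [DecidableEq ι] (u : ι → E) :
    ∑ i, ∑ j ∈ univ \ {i}, ‖u i - u j‖ ^ 2 = spread u :=
  sum_congr rfl fun i _ => by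
    rw [sdiff_singleton_eq_erase, sum_erase _ (by simp)]

theorem div_rpow_spread_mul_spread_le {K ς γ : ℝ} (hK : 0 ≤ K) (hς : 0 < ς) (hγ0 : 0 ≤ γ)
    (x v : ι → E) :
    K / (ς ^ 2 + spread x) ^ γ * spread v
      ≤ ∑ i, ∑ j, K / (ς ^ 2 + ‖x j - x i‖ ^ 2) ^ γ * ‖v i - v j‖ ^ 2 := by
  simp only [spread, mul_sum]
  gcongr with i _ j _
  exact sq_norm_sub_le_spread x j i

variable [InnerProductSpace ℝ E]

theorem sum_sum_inner_sub_sub (u b : ι → E) :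
    ∑ i, ∑ j, ⟪u i - u j, b i - b j⟫
      = 2 * (Fintype.card ι * ∑ i, ⟪u i, b i⟫ - ⟪∑ i, u i, ∑ i, b i⟫) := by
  simp only [inner_sub_left, inner_sub_right, sum_sub_distrib, sum_inner, inner_sum, sum_const,
    card_univ, nsmul_eq_mul]
  rw [sum_comm (f := fun i j => ⟪u j, b i⟫), ← mul_sum]
  ring

theorem sum_sum_smul_sub_eq_zero {c : ι → ι → ℝ} (hc : ∀ i j, c i j = c j i) (w : ι → E) :
    ∑ i, ∑ j, c i j • (w j - w i) = 0 := by
  have hswap : ∑ i, ∑ j, c i j • (w j - w i) = ∑ i, ∑ j, c i j • (w i - w j) := by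
    rw [sum_comm]
    exact sum_congr rfl fun i _ => sum_congr rfl fun j _ => by rw [hc]
  have h2 : (2 : ℝ) • ∑ i, ∑ j, c i j • (w j - w i) = 0 := by
    rw [two_smul]
    nth_rewrite 2 [hswap]
    simp only [← sum_add_distrib, ← smul_add, sub_add_sub_cancel, sub_self, smul_zero,
      sum_const_zero]
  exact (smul_eq_zero.1 h2).resolve_left two_ne_zero

theorem two_mul_sum_inner_sum_smul_sub {c : ι → ι → ℝ} (hc : ∀ i j, c i j = c j i) (w : ι → E) :
    2 * ∑ i, ⟪w i, ∑ j, c i j • (w j - w i)⟫ = -∑ i, ∑ j, c i j * ‖w i - w j‖ ^ 2 := by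
  simp only [inner_sum, real_inner_smul_right]
  have hswap : ∑ i, ∑ j, c i j * ⟪w i, w j - w i⟫ = ∑ i, ∑ j, c i j * ⟪w j, w i - w j⟫ := by
    rw [sum_comm]
    exact sum_congr rfl fun i _ => sum_congr rfl fun j _ => by rw [hc]
  rw [two_mul]
  nth_rewrite 2 [hswap]
  rw [← sum_neg_distrib, ← sum_add_distrib]
  refine sum_congr rfl fun i _ => ?_
  rw [← sum_neg_distrib, ← sum_add_distrib]
  refine sum_congr rfl fun j _ => ?_
  rw [← real_inner_self_eq_norm_sq]
  simp only [inner_sub_left, inner_sub_right, real_inner_comm (w i) (w j)]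
  ring

theorem sum_sum_inner_sub_sub_alignment {c : ι → ι → ℝ} (hc : ∀ i j, c i j = c j i) (w : ι → E) :
    ∑ i, ∑ j, ⟪w i - w j, (Fintype.card ι : ℝ)⁻¹ • ∑ k, c i k • (w k - w i)
        - (Fintype.card ι : ℝ)⁻¹ • ∑ k, c j k • (w k - w j)⟫
      = -∑ i, ∑ j, c i j * ‖w i - w j‖ ^ 2 := by
  rcases isEmpty_or_nonempty ι with hι | hι
  · simp
  have hn : (Fintype.card ι : ℝ) ≠ 0 := Nat.cast_ne_zero.2 Fintype.card_ne_zero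
  rw [sum_sum_inner_sub_sub (b := fun i => (Fintype.card ι : ℝ)⁻¹ • ∑ k, c i k • (w k - w i)),
    ← smul_sum, sum_sum_smul_sub_eq_zero hc, smul_zero, inner_zero_right,
    ← two_mul_sum_inner_sum_smul_sub hc]
  simp only [real_inner_smul_right, ← mul_sum]
  field_simp
  ring

theorem sum_sum_inner_sub_le_sqrt_spread_mul_sqrt_spread (x v : ι → E) :
    ∑ i, ∑ j, ⟪x i - x j, v i - v j⟫ ≤ √(spread x) * √(spread v) := by
  simp only [spread, ← Fintype.sum_prod_type']
  calc ∑ p : ι × ι, ⟪x p.1 - x p.2, v p.1 - v p.2⟫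
      ≤ ∑ p : ι × ι, ‖x p.1 - x p.2‖ * ‖v p.1 - v p.2‖ :=
        sum_le_sum fun _ _ => real_inner_le_norm _ _
    _ ≤ _ := Real.sum_mul_le_sqrt_mul_sqrt _ _ _

theorem hasDerivAt_spread {u : ι → ℝ → E} {u' : ι → E} {t : ℝ}
    (hu : ∀ i, HasDerivAt (u i) (u' i) t) :
    HasDerivAt (fun s => spread fun i => u i s)
      (2 * ∑ i, ∑ j, ⟪u i t - u j t, u' i - u' j⟫) t := by
  simp only [spread, mul_sum]
  exact HasDerivAt.fun_sum fun i _ => HasDerivAt.fun_sum fun j _ => ((hu i).sub (hu j)).norm_sq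

theorem hasDerivAt_spread_of_alignment {v : ι → ℝ → E} {c : ι → ι → ℝ} {t : ℝ}
    (hc : ∀ i j, c i j = c j i)
    (hv : ∀ i, HasDerivAt (v i) ((Fintype.card ι : ℝ)⁻¹ • ∑ j, c i j • (v j t - v i t)) t) :
    HasDerivAt (fun s => spread fun i => v i s)
      (-2 * ∑ i, ∑ j, c i j * ‖v i t - v j t‖ ^ 2) t := by
  simpa [sum_sum_inner_sub_sub_alignment hc] using hasDerivAt_spread hv

theorem mul_deriv_log_one_add_spread_le {K ς γ : ℝ} (hK : 0 ≤ K) (hς : 0 < ς) (hγ0 : 0 ≤ γ)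
    (hγ : γ ≤ 1 / 2) (x v : ι → E) :
    K / (3 + ς) * ((2 * ∑ i, ∑ j, ⟪x i - x j, v i - v j⟫) / (1 + spread x))
      ≤ K / (ς ^ 2 + spread x) ^ γ * √(spread v) := by
  have hx := spread_nonneg x
  calc K / (3 + ς) * ((2 * ∑ i, ∑ j, ⟪x i - x j, v i - v j⟫) / (1 + spread x))
      ≤ K / (3 + ς) * (2 * (√(spread x) * √(spread v)) / (1 + spread x)) := by
        gcongr
        exact sum_sum_inner_sub_le_sqrt_spread_mul_sqrt_spread x v
    _ = K / (3 + ς) * (2 * √(spread x) / (1 + spread x)) * √(spread v) := by ring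
    _ ≤ K / (ς ^ 2 + spread x) ^ γ * √(spread v) := by
        gcongr
        exact mul_two_mul_sqrt_div_le_div_rpow hK hς hγ0 hγ hx

end Spread

theorem cucker_smale_position_spread_bounded_general
    {d N : ℕ} (K ς γ : ℝ) (hK : 0 < K) (hς : 0 < ς)
    (hγ0 : 0 ≤ γ) (hγ : γ ≤ 1 / 2)
    (x v : Fin N → ℝ → EuclideanSpace ℝ (Fin d))
    (hx : ∀ i t, HasDerivAt (x i) (v i t) t)
    (hv : ∀ i t, HasDerivAt (v i)
      ((N : ℝ)⁻¹ • ∑ j, (K / (ς ^ 2 + ‖x j t - x i t‖ ^ 2) ^ γ) • (v j t - v i t)) t) :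
    ∃ B₀ > 0, ∀ t ≥ (0 : ℝ),
      (1 / 2 : ℝ) * ∑ i, ∑ j ∈ Finset.univ \ {i}, ‖x i t - x j t‖ ^ 2 ≤ B₀ := by
  set P : ℝ → ℝ := fun t => spread fun i => x i t
  set Q : ℝ → ℝ := fun t => spread fun i => v i t
  set c := K / (3 + ς)
  have hL : Antitone fun t => √(Q t) + c * Real.log (1 + P t) :=
    antitone_sqrt_add_mul_log_of_dissipation (κ := fun t => K / (ς ^ 2 + P t) ^ γ)
      (M := K / (ς ^ 2) ^ γ)
      (fun t => hasDerivAt_spread fun i => hx i t)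
      (fun t => hasDerivAt_spread_of_alignment
        (c := fun i j => K / (ς ^ 2 + ‖x j t - x i t‖ ^ 2) ^ γ) (fun i j => by rw [norm_sub_rev])
        fun i => by simpa using hv i t)
      (fun t => spread_nonneg _) (fun t => spread_nonneg _)
      (fun t => div_nonneg hK.le (Real.rpow_nonneg (by positivity [spread_nonneg (x · t)]) _))
      (fun t => by have : 0 ≤ P t := spread_nonneg _; gcongr; linarith)
      (fun t => by linarith [div_rpow_spread_mul_spread_le hK.le hς hγ0 (x · t) (v · t)])
      (fun t => mul_deriv_log_one_add_spread_le hK.le hς hγ0 hγ (x · t) (v · t))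
  refine ⟨Real.exp ((√(Q 0) + c * Real.log (1 + P 0)) / c), Real.exp_pos _, fun t ht => ?_⟩
  have hPt : 0 ≤ P t := spread_nonneg _
  have hlog : Real.log (1 + P t) ≤ (√(Q 0) + c * Real.log (1 + P 0)) / c := by
    rw [le_div_iff₀ (by positivity)]
    linarith [hL ht, Real.sqrt_nonneg (Q t)]
  rw [sum_sum_sdiff_singleton_eq_spread fun i => x i t]
  linarith [(Real.log_le_iff_le_exp (by linarith)).1 hlog]

/-- Cucker–Smale with `H(r) = K / (ς² + r²)^γ`, `0 ≤ γ ≤ 1/2`: the quantity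
`Γ(t) = (1/2) ∑_{i≠j} ‖x_i(t) − x_j(t)‖²` is uniformly bounded for `t ≥ 0`. -/
theorem cucker_smale_position_spread_bounded
    {d N : ℕ} (hN : 1 ≤ N) (K ς γ : ℝ) (hK : 0 < K) (hς : 0 < ς)
    (hγ0 : 0 ≤ γ) (hγ : γ ≤ 1 / 2)
    (x v : Fin N → ℝ → EuclideanSpace ℝ (Fin d))
    (hx : ∀ i t, HasDerivAt (x i) (v i t) t)
    (hv : ∀ i t, HasDerivAt (v i)
      ((N : ℝ)⁻¹ • ∑ j, (K / (ς ^ 2 + ‖x j t - x i t‖ ^ 2) ^ γ) • (v j t - v i t)) t) :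
    ∃ B₀ > 0, ∀ t ≥ (0 : ℝ),
      (1 / 2 : ℝ) * ∑ i, ∑ j ∈ Finset.univ \ {i}, ‖x i t - x j t‖ ^ 2 ≤ B₀ :=
  cucker_smale_position_spread_bounded_general K ς γ hK hς hγ0 hγ x v hx hv
end

section
/- Let N ≥ 1 and let x_i, v_i : [0, ∞) → ℝ^d (i = 1,…,N) be differentiable and satisfy the Cucker–Smale system x_i'(t) = v_i(t), v_i'(t) = (1/N) Σ_{j=1}^N H(‖x_j(t) − x_i(t)‖)(v_j(t) − v_i(t)), where H : ℝ → ℝ is nonnegative. Then for every i and every t ≥ 0, ‖v_i(t)‖ ≤ max_{1 ≤ j ≤ N} ‖v_j(0)‖; i.e., the velocity support remains inside the ball determined by the initial data. -/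
/-!
Let `f(t) = maxⱼ ‖vⱼ(t)‖²`. If `‖vᵢ(t)‖` is maximal, then `⟪vⱼ - vᵢ, vᵢ⟫ ≤ ‖vⱼ‖‖vᵢ‖ - ‖vᵢ‖² ≤ 0`
for every `j`, so the alignment force, a nonnegative combination of the `vⱼ - vᵢ`, makes
`‖vᵢ‖²` non-increasing at `t`. Hence the upper right Dini derivative of `f` is `≤ 0`, and
`f` never exceeds its initial value.
-/

open Finset Set Filter Topology

open scoped RealInnerProductSpace

theorem inner_sum_smul_sub_self_nonpos {E ι : Type*} [NormedAddCommGroup E]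
    [InnerProductSpace ℝ E] (s : Finset ι) {c : ι → ℝ} (hc : ∀ k ∈ s, 0 ≤ c k) {u : ι → E}
    {w : E} (hw : ∀ k ∈ s, ‖u k‖ ≤ ‖w‖) : ⟪∑ k ∈ s, c k • (u k - w), w⟫ ≤ 0 := by
  rw [sum_inner]
  refine sum_nonpos fun k hk => ?_
  have hdiff : ⟪u k - w, w⟫ ≤ 0 := by
    rw [inner_sub_left, real_inner_self_eq_norm_sq]
    nlinarith [real_inner_le_norm (u k) w, hw k hk, norm_nonneg w]
  rw [real_inner_smul_left]
  exact mul_nonpos_of_nonneg_of_nonpos (hc k hk) hdiff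

theorem eventually_lt_add_mul_sub_of_hasDerivWithinAt {g : ℝ → ℝ} {g' x c r : ℝ}
    (hg : HasDerivWithinAt g g' (Ici x) x) (hle : g x ≤ c) (hslope : g x = c → g' < r) :
    ∀ᶠ z in 𝓝[>] x, g z < c + r * (z - x) := by
  rcases hle.lt_or_eq with hlt | heq
  · have hline : Tendsto (fun z => c + r * (z - x)) (𝓝[>] x) (𝓝 c) :=
      (Continuous.tendsto' (by fun_prop) x c (by simp)).mono_left nhdsWithin_le_nhds
    exact (hg.continuousWithinAt.mono Ioi_subset_Ici_self).tendsto.eventually_lt hline hlt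
  · filter_upwards [hg.Ioi_of_Ici.limsup_slope_le' (lt_irrefl x) (hslope heq),
      self_mem_nhdsWithin] with z hz hxz
    rw [slope_def_field, div_lt_iff₀ (sub_pos.2 hxz)] at hz
    linarith

theorem image_le_of_deriv_right_nonpos_at_max {ι : Type*} [Fintype ι] {g g' : ι → ℝ → ℝ}
    {a b C : ℝ} (hcont : ∀ k, ContinuousOn (g k) (Icc a b))
    (hderiv : ∀ k, ∀ x ∈ Ico a b, HasDerivWithinAt (g k) (g' k x) (Ici x) x)
    (hmax : ∀ k, ∀ x ∈ Ico a b, (∀ l, g l x ≤ g k x) → g' k x ≤ 0)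
    (ha : ∀ k, g k a ≤ C) : ∀ k, ∀ x ∈ Icc a b, g k x ≤ C := by
  intro k x hx
  have hne : (univ : Finset ι).Nonempty := ⟨k, mem_univ k⟩
  set f : ℝ → ℝ := fun y => univ.sup' hne (g · y)
  have hg_le_f : ∀ l y, g l y ≤ f y := fun l y => le_sup' (g · y) (mem_univ l)
  suffices hf : f x ≤ C from (hg_le_f k x).trans hf
  refine image_le_of_liminf_slope_right_le_deriv_boundary (B := fun _ => C) (B' := fun _ => 0)
    (ContinuousOn.finset_sup'_apply hne fun l _ => hcont l) (sup'_le _ _ fun l _ => ha l)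
    continuousOn_const (fun y _ => hasDerivWithinAt_const y _ C) ?_ hx
  intro y hy r hr
  have hbelow : ∀ l, ∀ᶠ z in 𝓝[>] y, g l z < f y + r * (z - y) := fun l =>
    eventually_lt_add_mul_sub_of_hasDerivWithinAt (hderiv l y hy) (hg_le_f l y)
      fun heq => (hmax l y hy fun m => heq ▸ hg_le_f m y).trans_lt hr
  refine Eventually.frequently ?_
  filter_upwards [eventually_all.2 hbelow, self_mem_nhdsWithin] with z hz hyz
  have hfz : f z < f y + r * (z - y) := (sup'_lt_iff hne).2 fun l _ => hz l
  rw [slope_def_field, div_lt_iff₀ (sub_pos.2 hyz)]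
  linarith

theorem cucker_smale_velocity_support_bounded_general
    {d N : ℕ} (H : ℝ → ℝ) (hH : ∀ r, 0 ≤ H r)
    (x v : Fin N → ℝ → EuclideanSpace ℝ (Fin d))
    (hv : ∀ i t, 0 ≤ t → HasDerivAt (v i)
      ((N : ℝ)⁻¹ • ∑ j, H ‖x j t - x i t‖ • (v j t - v i t)) t) :
    ∀ i, ∀ t : ℝ, 0 ≤ t → ‖v i t‖ ≤ ⨆ j, ‖v j 0‖ := by
  intro i t ht
  set R := ⨆ j, ‖v j 0‖
  have hR : ∀ j, ‖v j 0‖ ≤ R := le_ciSup (Set.finite_range _).bddAbove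
  have hspeed : ∀ j s, 0 ≤ s → HasDerivAt (‖v j ·‖ ^ 2)
      (2 * ⟪v j s, (N : ℝ)⁻¹ • ∑ k, H ‖x k s - x j s‖ • (v k s - v j s)⟫) s :=
    fun j s hs => (hv j s hs).norm_sq
  have hsq : ‖v i t‖ ^ 2 ≤ R ^ 2 := by
    refine image_le_of_deriv_right_nonpos_at_max (g := fun j s => ‖v j s‖ ^ 2)
      (fun j s hs => (hspeed j s hs.1).continuousAt.continuousWithinAt)
      (fun j s hs => (hspeed j s hs.1).hasDerivWithinAt) ?_
      (fun j => pow_le_pow_left₀ (norm_nonneg _) (hR j) 2) i t ⟨ht, le_rfl⟩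
    intro j s _ hj
    have hmax : ∀ k ∈ Finset.univ, ‖v k s‖ ≤ ‖v j s‖ := fun k _ =>
      pow_le_pow_iff_left₀ (norm_nonneg _) (norm_nonneg _) two_ne_zero |>.1 (hj k)
    rw [real_inner_comm, real_inner_smul_left]
    exact mul_nonpos_of_nonneg_of_nonpos zero_le_two <| mul_nonpos_of_nonneg_of_nonpos
      (by positivity) (inner_sum_smul_sub_self_nonpos _ (fun k _ => hH _) hmax)
  exact (pow_le_pow_iff_left₀ (norm_nonneg _) ((norm_nonneg _).trans (hR i)) two_ne_zero).1 hsq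

/-- Along any solution of the Cucker–Smale system with nonnegative communication
rate `H`, every speed stays bounded by the largest initial speed. -/
theorem cucker_smale_velocity_support_bounded
    {d N : ℕ} (hN : 1 ≤ N) (H : ℝ → ℝ) (hH : ∀ r, 0 ≤ H r)
    (x v : Fin N → ℝ → EuclideanSpace ℝ (Fin d))
    (hx : ∀ i t, 0 ≤ t → HasDerivAt (x i) (v i t) t)
    (hv : ∀ i t, 0 ≤ t → HasDerivAt (v i)
      ((N : ℝ)⁻¹ • ∑ j, H ‖x j t - x i t‖ • (v j t - v i t)) t) :
    ∀ i, ∀ t : ℝ, 0 ≤ t → ‖v i t‖ ≤ ⨆ j, ‖v j 0‖ :=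
  cucker_smale_velocity_support_bounded_general H hH x v hv
end

section
/- Let a, b > 0 and let v : [0, ∞) → ℝ^d be a differentiable solution of the self-propulsion/friction equation v'(t) = (a − b‖v(t)‖²) v(t) with v(0) ≠ 0. Then ‖v(t)‖ → √(a/b) as t → ∞. -/
/-!
The squared speed `u = ‖v‖²` obeys the logistic equation `u' = (2a - 2b u) u`. Bernoulli's
substitution `1/u` makes it linear, which yields the explicit solution
`u(t) (2a + 2b u(0) (e^{2at} - 1)) = 2a u(0) e^{2at}`; the defect of this identity satisfies a linear
homogeneous equation with zero initial value, so it vanishes by Grönwall. Since `u(0) > 0`, the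
explicit solution tends to `a / b`.
-/

open Filter Set Real

theorem eq_zero_of_hasDerivAt_eq_smul {E : Type*} [NormedAddCommGroup E] [NormedSpace ℝ E]
    {F : ℝ → E} {c : ℝ → ℝ} {t₀ : ℝ} (hc : ContinuousOn c (Ici t₀))
    (hF : ∀ t ∈ Ici t₀, HasDerivAt F (c t • F t) t) (h₀ : F t₀ = 0) :
    ∀ t ∈ Ici t₀, F t = 0 := by
  intro t ht
  obtain ⟨K, hK⟩ := isCompact_Icc.exists_bound_of_continuousOn (hc.mono Icc_subset_Ici_self)
  refine eq_zero_of_abs_deriv_le_mul_abs_self_of_eq_zero_right (K := K)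
    (fun s hs => (hF s hs.1).continuousAt.continuousWithinAt)
    (fun s hs => (hF s hs.1).hasDerivWithinAt) h₀ (fun s hs => ?_) t ⟨ht, le_rfl⟩
  rw [norm_smul]
  exact mul_le_mul_of_nonneg_right (hK s (Ico_subset_Icc_self hs)) (norm_nonneg _)

theorem HasDerivAt.norm_sq_of_eq_smul {F : Type*} [NormedAddCommGroup F] [InnerProductSpace ℝ F]
    {f : ℝ → F} {c x : ℝ} (hf : HasDerivAt f (c • f x) x) :
    HasDerivAt (‖f ·‖ ^ 2) (2 * c * ‖f x‖ ^ 2) x := by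
  simpa [real_inner_smul_right, real_inner_self_eq_norm_sq, mul_assoc] using hf.norm_sq

theorem logistic_mul_eq {u : ℝ → ℝ} {α β : ℝ}
    (hu : ∀ t ∈ Ici (0 : ℝ), HasDerivAt u ((α - β * u t) * u t) t) :
    ∀ t ∈ Ici (0 : ℝ), u t * (α + β * u 0 * (exp (α * t) - 1)) = α * u 0 * exp (α * t) := by
  have hexp : ∀ t, HasDerivAt (fun t => exp (α * t)) (exp (α * t) * α) t := fun t => by
    simpa using ((hasDerivAt_id t).const_mul α).exp
  set D : ℝ → ℝ := fun t => α + β * u 0 * (exp (α * t) - 1)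
  have hD : ∀ t, HasDerivAt D (β * u 0 * (exp (α * t) * α)) t := fun t =>
    (((hexp t).sub_const 1).const_mul _).const_add α
  have hdefect : ∀ t ∈ Ici (0 : ℝ), HasDerivAt (fun t => u t * D t - α * u 0 * exp (α * t))
      ((α - β * u t) • (u t * D t - α * u 0 * exp (α * t))) t := fun t ht =>
    ((hu t ht).mul (hD t)).sub ((hexp t).const_mul _) |>.congr_deriv
      (by simp only [D, smul_eq_mul]; ring)
  have hcoeff : ContinuousOn (fun t => α - β * u t) (Ici 0) := fun t ht =>
    (continuousAt_const.sub ((hu t ht).continuousAt.const_mul β)).continuousWithinAt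
  have hdefect₀ : u 0 * D 0 - α * u 0 * exp (α * 0) = 0 := by
    simp only [D, mul_zero, exp_zero, sub_self, add_zero]; ring
  exact fun t ht => sub_eq_zero.mp (eq_zero_of_hasDerivAt_eq_smul hcoeff hdefect hdefect₀ t ht)

theorem tendsto_of_logistic_mul_eq {u : ℝ → ℝ} {α β : ℝ} (hα : 0 < α) (hβ : 0 < β)
    (hu₀ : 0 < u 0)
    (hu : ∀ t ∈ Ici (0 : ℝ), u t * (α + β * u 0 * (exp (α * t) - 1)) = α * u 0 * exp (α * t)) :
    Tendsto u atTop (nhds (α / β)) := by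
  have hdecay : Tendsto (fun t => exp (-(α * t))) atTop (nhds 0) :=
    tendsto_exp_neg_atTop_nhds_zero.comp (tendsto_id.const_mul_atTop hα)
  have hlim : Tendsto (fun t => α * u 0 / (α * exp (-(α * t)) + β * u 0 * (1 - exp (-(α * t)))))
      atTop (nhds (α * u 0 / (α * 0 + β * u 0 * (1 - 0)))) :=
    tendsto_const_nhds.div ((hdecay.const_mul α).add ((tendsto_const_nhds.sub hdecay).const_mul _))
      (by simp [hβ.ne', hu₀.ne'])
  rw [show α * u 0 / (α * 0 + β * u 0 * (1 - 0)) = α / β by field_simp; ring] at hlim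
  refine hlim.congr' ?_
  filter_upwards [eventually_ge_atTop 0] with t ht
  have hD : 0 < α + β * u 0 * (exp (α * t) - 1) := by
    have := mul_nonneg (mul_pos hβ hu₀).le (sub_nonneg.mpr (one_le_exp (by positivity : 0 ≤ α * t)))
    linarith
  have hscale : α * exp (-(α * t)) + β * u 0 * (1 - exp (-(α * t)))
      = (α + β * u 0 * (exp (α * t) - 1)) * exp (-(α * t)) := by
    rw [exp_neg]; field_simp
  rw [hscale, div_eq_iff (by positivity), ← mul_assoc, hu t ht, mul_assoc, ← exp_add]
  simp

/-- Self-propulsion/friction: any nonzero solution of `v' = (a − b‖v‖²) v` with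
`a, b > 0` has speed converging to `√(a/b)`. -/
theorem self_propulsion_speed_limit
    {d : ℕ} (a b : ℝ) (ha : 0 < a) (hb : 0 < b)
    (v : ℝ → EuclideanSpace ℝ (Fin d))
    (hv : ∀ t : ℝ, 0 ≤ t → HasDerivAt v ((a - b * ‖v t‖ ^ 2) • v t) t)
    (hv0 : v 0 ≠ 0) :
    Filter.Tendsto (fun t : ℝ => ‖v t‖) Filter.atTop (nhds (Real.sqrt (a / b))) := by
  set u : ℝ → ℝ := fun t => ‖v t‖ ^ 2
  have hu : ∀ t ∈ Ici (0 : ℝ), HasDerivAt u ((2 * a - 2 * b * u t) * u t) t := fun t ht =>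
    (hv t ht).norm_sq_of_eq_smul.congr_deriv (by ring)
  have hu₀ : 0 < u 0 := by positivity
  have hlim := tendsto_of_logistic_mul_eq (by positivity) (by positivity) hu₀ (logistic_mul_eq hu)
  rw [mul_div_mul_left _ _ two_ne_zero] at hlim
  simpa [u] using hlim.sqrt
end

section
/- Let d ≥ 1, λ, σ > 0, u₀ ∈ ℝ^d, and let M(v) = (λ/(2πσ))^{d/2} exp(−λ‖v − u₀‖²/(2σ)) be the global Maxwellian with mean u₀ and variance σ/λ in each coordinate. Let H : ℝ^d × ℝ^d → ℝ and ρ : ℝ^d → [0, ∞) be such that y ↦ H(x,y) ρ(y) is integrable for every x, and set f(x,v) = ρ(x) M(v) and (H∗ρ)(x) = ∫_{ℝ^d} H(x,y) ρ(y) dy. Define ξ(f)(x,v) = ∫_{ℝ^d} ∫_{ℝ^d} H(x,y) (w − v) f(y,w) dw dy. Then for every x and v the Fokker–Planck flux vanishes identically: σ (H∗ρ)(x) ∇_v f(x,v) − λ ξ(f)(x,v) f(x,v) = 0. In particular the global Maxwellian profile f = ρ M is a steady state of the operator ∇_v · (σ (H∗ρ) ∇_v f − λ ξ(f) f). -/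
/-!
The Maxwellian `M` with variance `σ/λ` satisfies `σ ∇M(v) = -λ (v - u₀) M(v)`, and, being a
probability density with mean `u₀`, `∫ M(w) (w - v) dw = u₀ - v`. Hence
`ξ(f)(x,v) = (H∗ρ)(x) (u₀ - v)`, and both terms of the flux equal
`-λ (H∗ρ)(x) ρ(x) M(v) (v - u₀)`. The mean is read off from the oddness of the centred Gaussian.
-/

open MeasureTheory Real Module

section

variable {V : Type*} [NormedAddCommGroup V] [InnerProductSpace ℝ V]

theorem HasGradientAt.const_mul [CompleteSpace V] {F : V → ℝ} {g x : V}
    (h : HasGradientAt F g x) (c : ℝ) : HasGradientAt (fun y => c * F y) (c • g) x := by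
  rw [hasGradientAt_iff_hasFDerivAt] at h ⊢
  simpa using h.const_mul c

lemma integral_radial_smul_self_eq_zero [MeasurableSpace V] [MeasurableNeg V] (μ : Measure V)
    [μ.IsNegInvariant] (g : ℝ → ℝ) : ∫ u, g ‖u‖ • u ∂μ = 0 := by
  have h := integral_neg_eq_self (fun u => g ‖u‖ • u) μ
  simp only [norm_neg, smul_neg, integral_neg] at h
  linear_combination (norm := module) (-2⁻¹ : ℝ) • h

variable [FiniteDimensional ℝ V]

/-- The isotropic Gaussian density with mean `u₀` and variance `1 / (2 a)` in each direction. -/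
noncomputable def gaussianDensity (a : ℝ) (u₀ v : V) : ℝ :=
  (a / π) ^ ((finrank ℝ V : ℝ) / 2) * exp (-a * ‖v - u₀‖ ^ 2)

theorem hasGradientAt_gaussianDensity (a : ℝ) (u₀ v : V) :
    HasGradientAt (gaussianDensity a u₀) ((-2 * a * gaussianDensity a u₀ v) • (v - u₀)) v := by
  have h := (((hasFDerivAt_sub_const (x := v) u₀).norm_sq.const_mul (-a)).exp).const_mul
    ((a / π) ^ ((finrank ℝ V : ℝ) / 2))
  refine hasGradientAt_iff_hasFDerivAt.2 (h.congr_fderiv ?_)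
  ext z
  simp [gaussianDensity]
  ring

variable [MeasurableSpace V] [BorelSpace V]

lemma integrable_exp_neg_mul_sq_norm {a : ℝ} (ha : 0 < a) :
    Integrable fun u : V => exp (-a * ‖u‖ ^ 2) :=
  .of_integral_ne_zero <| by
    rw [GaussianFourier.integral_rexp_neg_mul_sq_norm ha]; positivity

lemma le_exp_sq (t : ℝ) : t ≤ exp (t ^ 2) := by
  nlinarith [add_one_le_exp (t ^ 2), sq_nonneg (t - 1 / 2)]

lemma integrable_exp_neg_mul_sq_norm_smul_self {a : ℝ} (ha : 0 < a) :
    Integrable fun u : V => exp (-a * ‖u‖ ^ 2) • u := by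
  set b := a / 2
  have hb : 0 < b := by positivity
  refine ((integrable_exp_neg_mul_sq_norm hb).const_mul (√b)⁻¹).mono' (by fun_prop)
    (.of_forall fun u => ?_)
  -- the factor `‖u‖` is absorbed by half of the Gaussian decay
  have hsqrt : √b * ‖u‖ ≤ exp (b * ‖u‖ ^ 2) := by
    simpa [mul_pow, sq_sqrt hb.le] using le_exp_sq (√b * ‖u‖)
  have hsb : 0 < √b := sqrt_pos.mpr hb
  rw [norm_smul, norm_of_nonneg (exp_pos _).le]
  calc exp (-a * ‖u‖ ^ 2) * ‖u‖
      = (√b)⁻¹ * (exp (-b * ‖u‖ ^ 2) * exp (-b * ‖u‖ ^ 2) * (√b * ‖u‖)) := by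
        rw [← exp_add]; field_simp; congr 2; ring
    _ ≤ (√b)⁻¹ * (exp (-b * ‖u‖ ^ 2) * exp (-b * ‖u‖ ^ 2) * exp (b * ‖u‖ ^ 2)) := by gcongr
    _ = (√b)⁻¹ * exp (-b * ‖u‖ ^ 2) := by
        rw [mul_assoc _ _ (exp _), ← exp_add]; simp

lemma integrable_gaussianDensity {a : ℝ} (ha : 0 < a) (u₀ : V) :
    Integrable (gaussianDensity a u₀) :=
  ((integrable_exp_neg_mul_sq_norm ha).comp_sub_right u₀).const_mul _

lemma integral_gaussianDensity {a : ℝ} (ha : 0 < a) (u₀ : V) :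
    ∫ v, gaussianDensity a u₀ v = 1 := by
  simp only [gaussianDensity]
  rw [integral_const_mul, integral_sub_right_eq_self (fun v => exp (-a * ‖v‖ ^ 2)) u₀,
    GaussianFourier.integral_rexp_neg_mul_sq_norm ha, ← mul_rpow (by positivity) (by positivity),
    div_mul_div_comm, mul_comm a π, div_self (by positivity), one_rpow]

lemma integral_gaussianDensity_smul_sub_self (a : ℝ) (u₀ : V) :
    ∫ w, gaussianDensity a u₀ w • (w - u₀) = 0 := by
  simp only [gaussianDensity, mul_smul]
  rw [integral_smul, integral_sub_right_eq_self (fun w => exp (-a * ‖w‖ ^ 2) • w) u₀,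
    integral_radial_smul_self_eq_zero volume (fun t => exp (-a * t ^ 2)), smul_zero]

lemma integral_gaussianDensity_smul_sub {a : ℝ} (ha : 0 < a) (u₀ v : V) :
    ∫ w, gaussianDensity a u₀ w • (w - v) = u₀ - v := by
  have hsplit : ∀ w, gaussianDensity a u₀ w • (w - v)
      = gaussianDensity a u₀ w • (w - u₀) + gaussianDensity a u₀ w • (u₀ - v) := fun w => by
    rw [← smul_add, sub_add_sub_cancel]
  have hint : Integrable fun w => gaussianDensity a u₀ w • (w - u₀) := by
    simp only [gaussianDensity, mul_smul]
    exact ((integrable_exp_neg_mul_sq_norm_smul_self ha).comp_sub_right u₀).smul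
      ((a / π) ^ ((finrank ℝ V : ℝ) / 2))
  rw [integral_congr_ae (.of_forall hsplit), integral_add hint
    ((integrable_gaussianDensity ha u₀).smul_const _), integral_gaussianDensity_smul_sub_self,
    integral_smul_const, integral_gaussianDensity ha, zero_add, one_smul]

end

theorem maxwellian_is_steady_state_general
    {d : ℕ} (lam σ : ℝ) (hlam : 0 < lam) (hσ : 0 < σ)
    (u₀ : EuclideanSpace ℝ (Fin d))
    (Mx : EuclideanSpace ℝ (Fin d) → ℝ)
    (hMx : ∀ v, Mx v = (lam / (2 * Real.pi * σ)) ^ ((d : ℝ) / 2) *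
        Real.exp (-lam * ‖v - u₀‖ ^ 2 / (2 * σ)))
    (H : EuclideanSpace ℝ (Fin d) → EuclideanSpace ℝ (Fin d) → ℝ)
    (ρ : EuclideanSpace ℝ (Fin d) → ℝ)
    (f : EuclideanSpace ℝ (Fin d) → EuclideanSpace ℝ (Fin d) → ℝ)
    (hf : ∀ x v, f x v = ρ x * Mx v)
    (Hρ : EuclideanSpace ℝ (Fin d) → ℝ)
    (hHρ : ∀ x, Hρ x = ∫ y, H x y * ρ y)
    (ξ : EuclideanSpace ℝ (Fin d) → EuclideanSpace ℝ (Fin d) → EuclideanSpace ℝ (Fin d))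
    (hξ : ∀ x v, ξ x v = ∫ y, ∫ w, (H x y * f y w) • (w - v)) :
    ∀ x v, (σ * Hρ x) • gradient (fun w => f x w) v - (lam * f x v) • ξ x v = 0 := by
  intro x v
  set a := lam / (2 * σ)
  have ha : 0 < a := by positivity
  have hM : Mx = gaussianDensity a u₀ := funext fun w => by
    rw [hMx, gaussianDensity, finrank_euclideanSpace_fin]
    congr 2 <;> ring
  have hgrad : gradient (fun w => f x w) v = ρ x • (-2 * a * Mx v) • (v - u₀) := by
    simp only [hf, hM]
    exact ((hasGradientAt_gaussianDensity a u₀ v).const_mul (ρ x)).gradient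
  have hξxv : ξ x v = Hρ x • (u₀ - v) := by
    simp only [hξ, hf, hHρ, hM, ← integral_smul_const, mul_smul, integral_smul,
      integral_gaussianDensity_smul_sub ha]
  rw [hgrad, hξxv, hf]
  match_scalars <;> (simp only [a]; field_simp; ring)

/-- The global Maxwellian profile `f(x,v) = ρ(x) M(v)` makes the Fokker–Planck flux
`σ (H∗ρ) ∇_v f − λ ξ(f) f` vanish identically, hence is a steady state of the
operator `∇_v · (σ (H∗ρ) ∇_v f − λ ξ(f) f)`. -/
theorem maxwellian_is_steady_state
    {d : ℕ} (hd : 1 ≤ d) (lam σ : ℝ) (hlam : 0 < lam) (hσ : 0 < σ)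
    (u₀ : EuclideanSpace ℝ (Fin d))
    (Mx : EuclideanSpace ℝ (Fin d) → ℝ)
    (hMx : ∀ v, Mx v = (lam / (2 * Real.pi * σ)) ^ ((d : ℝ) / 2) *
        Real.exp (-lam * ‖v - u₀‖ ^ 2 / (2 * σ)))
    (H : EuclideanSpace ℝ (Fin d) → EuclideanSpace ℝ (Fin d) → ℝ)
    (ρ : EuclideanSpace ℝ (Fin d) → ℝ) (hρ : ∀ y, 0 ≤ ρ y)
    (hint : ∀ x, MeasureTheory.Integrable (fun y => H x y * ρ y))
    (f : EuclideanSpace ℝ (Fin d) → EuclideanSpace ℝ (Fin d) → ℝ)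
    (hf : ∀ x v, f x v = ρ x * Mx v)
    (Hρ : EuclideanSpace ℝ (Fin d) → ℝ)
    (hHρ : ∀ x, Hρ x = ∫ y, H x y * ρ y)
    (ξ : EuclideanSpace ℝ (Fin d) → EuclideanSpace ℝ (Fin d) → EuclideanSpace ℝ (Fin d))
    (hξ : ∀ x v, ξ x v = ∫ y, ∫ w, (H x y * f y w) • (w - v)) :
    ∀ x v, (σ * Hρ x) • gradient (fun w => f x w) v - (lam * f x v) • ξ x v = 0 :=
  maxwellian_is_steady_state_general lam σ hlam hσ u₀ Mx hMx H ρ f hf Hρ hHρ ξ hξ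
end
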